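/- Under the assumptions that Ã(|·|) is twice weakly differentiable on Ω−Ω with ΔÃ(|x−x'|) ∈ L^2(Ω×Ω) and that (u,v) ↦ ∫_Ω∫_Ω Ã(|x−x'|) ∇u(x):∇v(x') dx'dx defines an inner product on C_c^∞(Ω;ℝⁿ), the space L^2(Ω;ℝⁿ) embeds continuously into the completion V_A of C_c^∞(Ω;ℝⁿ) under the norm ‖u‖_A = (u,u)_A^{1/2}; in particular ‖u‖_A² ≤ ‖ΔÃ(|·−·|)‖_{L²(Ω×Ω)} ‖u‖²_{L²(Ω;ℝⁿ)} for all u ∈ C_c^∞(Ω;ℝⁿ). -/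

import Mathlib

open MeasureTheory Pointwise

noncomputable section

/-- The Jacobian matrix of a vector field on ℝⁿ. -/
def jac {n : ℕ} (u : EuclideanSpace ℝ (Fin n) → EuclideanSpace ℝ (Fin n))
    (x : EuclideanSpace ℝ (Fin n)) : Matrix (Fin n) (Fin n) ℝ :=
  fun k m => fderiv ℝ u x (EuclideanSpace.single m 1) k

/-- The Frobenius inner product of two matrices. -/
def frob {n : ℕ} (A B : Matrix (Fin n) (Fin n) ℝ) : ℝ := ∑ k, ∑ m, A k m * B k m

/-- The Laplacian of a scalar function on ℝⁿ (sum of second partials). -/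
def lap {n : ℕ} (F : EuclideanSpace ℝ (Fin n) → ℝ) (x : EuclideanSpace ℝ (Fin n)) : ℝ :=
  ∑ m, fderiv ℝ (fun y => fderiv ℝ F y (EuclideanSpace.single m 1)) x
    (EuclideanSpace.single m 1)

/-- Smooth compactly supported vector field with support inside Ω. -/
def IsTestVF {n : ℕ} (Ω : Set (EuclideanSpace ℝ (Fin n)))
    (u : EuclideanSpace ℝ (Fin n) → EuclideanSpace ℝ (Fin n)) : Prop :=
  ContDiff ℝ (⊤ : ℕ∞) u ∧ HasCompactSupport u ∧ tsupport u ⊆ Ω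


open Set Filter Metric

variable {n : ℕ}

local notation "E" => EuclideanSpace ℝ (Fin n)


lemma fderiv_zero_of_nmem {V : Type*} [NormedAddCommGroup V] [NormedSpace ℝ V]
    {v : E → V} {x : E} (hx : x ∉ tsupport v) :
    fderiv ℝ v x = 0 := by
  have h0 : v =ᶠ[nhds x] 0 := notMem_tsupport_iff_eventuallyEq.mp hx
  rw [h0.fderiv_eq]
  exact fderiv_const_apply 0

lemma continuous_of_on_of_zero {X : Type*} [TopologicalSpace X] {f : X → ℝ}
    {U C : Set X} (hU : IsOpen U)
    (hC : IsClosed C) (hCU : C ⊆ U) (hf : ContinuousOn f U)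
    (h0 : ∀ x ∉ C, f x = 0) : Continuous f := by
  rw [continuous_iff_continuousAt]
  intro x
  by_cases hx : x ∈ U
  · exact hf.continuousAt (hU.mem_nhds hx)
  · have hxC : x ∉ C := fun h => hx (hCU h)
    have : f =ᶠ[nhds x] fun _ => (0 : ℝ) :=
      eventually_of_mem (hC.isOpen_compl.mem_nhds hxC) fun y hy => h0 y hy
    exact this.continuousAt

theorem integral_fderiv_apply_eq_zero {h : E → ℝ}
    (hd : ContDiff ℝ 1 h) (hc : HasCompactSupport h) (w : E) :
    ∫ x : E, fderiv ℝ h x w = 0 := by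
  set g : E → ℝ := fun x => fderiv ℝ h x w with hg
  have hgc : Continuous g := by
    have := hd.continuous_fderiv one_ne_zero
    exact this.clm_apply continuous_const
  have hgs : ∀ x ∉ tsupport h, g x = 0 := by
    intro x hx
    simp [hg, fderiv_zero_of_nmem hx]
  have hgcs : HasCompactSupport g := HasCompactSupport.intro hc hgs
  obtain ⟨M, hM⟩ := hgc.bounded_above_of_compact_support hgcs
  set K : Set E := tsupport h + closedBall (0 : E) ‖w‖ with hK
  have hKc : IsCompact K := IsCompact.add hc (isCompact_closedBall _ _)
  have hKm : MeasurableSet K := hKc.isClosed.measurableSet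
  have key := hasDerivAt_integral_of_dominated_loc_of_deriv_le
    (F := fun (t : ℝ) (x : E) => h (x + t • w))
    (F' := fun (t : ℝ) (x : E) => g (x + t • w))
    (x₀ := (0:ℝ)) (μ := volume) (bound := K.indicator fun _ => M)
    (s := Metric.ball 0 1) (Metric.ball_mem_nhds 0 one_pos)
    (Eventually.of_forall fun t =>
      (hd.continuous.comp (by continuity)).aestronglyMeasurable)
    (by
      have : Integrable h volume := hd.continuous.integrable_of_hasCompactSupport hc
      simpa using (this.comp_add_right ((0:ℝ) • w)))
    ((hgc.comp (by continuity)).aestronglyMeasurable)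
    (Eventually.of_forall fun x => by
      intro t ht
      show ‖g (x + t • w)‖ ≤ K.indicator (fun _ => M) x
      by_cases hxK : x ∈ K
      · rw [Set.indicator_of_mem hxK]
        exact hM _
      · have : g (x + t • w) = 0 := by
          apply hgs
          intro hmem
          apply hxK
          rw [hK]
          refine ⟨x + t • w, hmem, -(t • w), ?_, add_neg_cancel_right x (t • w)⟩
          simp only [mem_closedBall, dist_zero_right, norm_neg, norm_smul, Real.norm_eq_abs]
          have : |t| ≤ 1 := le_of_lt (by simpa [Real.dist_eq] using ht)
          calc |t| * ‖w‖ ≤ 1 * ‖w‖ := by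
                exact mul_le_mul_of_nonneg_right this (norm_nonneg w)
            _ = ‖w‖ := one_mul _
        rw [Set.indicator_of_notMem hxK, this]
        simp)
    ((integrable_indicator_iff hKm).2 (integrableOn_const hKc.measure_lt_top.ne))
    (Eventually.of_forall fun x => by
      intro t ht
      have h1 : HasDerivAt (fun s : ℝ => x + s • w) w t := by
        simpa using ((hasDerivAt_id t).smul_const w).const_add x
      exact ((hd.differentiable one_ne_zero (x + t • w)).hasFDerivAt.comp_hasDerivAt t h1))
  obtain ⟨-, hder⟩ := key
  have hconst : (fun t : ℝ => ∫ x : E, h (x + t • w)) = fun _ => ∫ x : E, h x := by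
    funext t
    exact integral_add_right_eq_self h (t • w)
  rw [hconst] at hder
  have h2 := hder.unique (hasDerivAt_const 0 _)
  simpa using h2
theorem ibp {Ω : Set E} (hΩ : IsOpen Ω) {G v : E → ℝ}
    (hG : ContDiffOn ℝ 1 G Ω) (hv : ContDiff ℝ (⊤ : ℕ∞) v) (hvc : HasCompactSupport v)
    (hvs : tsupport v ⊆ Ω) (w : E) :
    ∫ x in Ω, G x * fderiv ℝ v x w = - ∫ x in Ω, fderiv ℝ G x w * v x := by
  have hvd : Differentiable ℝ v := hv.differentiable (by simp)
  have hvf : Continuous (fun x => fderiv ℝ v x) := hv.continuous_fderiv (by simp)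
  set h : E → ℝ := fun x => G x * v x with hh
  -- formula for the derivative
  have key : ∀ x, fderiv ℝ h x = G x • fderiv ℝ v x + v x • fderiv ℝ G x := by
    intro x
    by_cases hx : x ∈ Ω
    · have hGd : DifferentiableAt ℝ G x :=
        (hG.contDiffAt (hΩ.mem_nhds hx)).differentiableAt one_ne_zero
      exact fderiv_mul hGd (hvd x)
    · have hxK : x ∉ tsupport v := fun hmem => hx (hvs hmem)
      have hv0 : v =ᶠ[nhds x] 0 := notMem_tsupport_iff_eventuallyEq.mp hxK
      have hh0 : h =ᶠ[nhds x] 0 := hv0.mono fun y hy => by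
        simp only [hh]; rw [hy]; simp
      rw [hh0.fderiv_eq, hv0.fderiv_eq]
      have hvx : v x = 0 := image_eq_zero_of_notMem_tsupport hxK
      rw [hvx]
      rw [show fderiv ℝ (0 : E → ℝ) x = 0 from fderiv_const_apply 0]
      simp
  have hdiff : Differentiable ℝ h := by
    intro x
    by_cases hx : x ∈ Ω
    · have hGd : DifferentiableAt ℝ G x :=
        (hG.contDiffAt (hΩ.mem_nhds hx)).differentiableAt one_ne_zero
      exact hGd.mul (hvd x)
    · have hxK : x ∉ tsupport v := fun hmem => hx (hvs hmem)
      have hv0 : v =ᶠ[nhds x] 0 := notMem_tsupport_iff_eventuallyEq.mp hxK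
      have hh0 : h =ᶠ[nhds x] 0 := hv0.mono fun y hy => by
        simp only [hh]; rw [hy]; simp
      exact (differentiableAt_const (0:ℝ)).congr_of_eventuallyEq hh0
  have hfc : Continuous (fun x => fderiv ℝ h x) := by
    rw [continuous_iff_continuousAt]
    intro x
    by_cases hx : x ∈ Ω
    · have h1 : ContinuousAt G x := hG.continuousOn.continuousAt (hΩ.mem_nhds hx)
      have h2 : ContinuousAt (fderiv ℝ G) x :=
        (hG.continuousOn_fderiv_of_isOpen hΩ le_rfl).continuousAt (hΩ.mem_nhds hx)
      have : ContinuousAt (fun x => G x • fderiv ℝ v x + v x • fderiv ℝ G x) x :=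
        ((h1.smul hvf.continuousAt).add (hv.continuous.continuousAt.smul h2))
      exact this.congr (Eventually.of_forall fun y => (key y).symm)
    · have hxK : x ∉ tsupport v := fun hmem => hx (hvs hmem)
      have hev : ∀ᶠ y in nhds x, fderiv ℝ h y = 0 := by
        have hop : IsOpen (tsupport v)ᶜ := (isClosed_tsupport v).isOpen_compl
        filter_upwards [hop.mem_nhds hxK] with y hy
        have hv0 : v =ᶠ[nhds y] 0 := notMem_tsupport_iff_eventuallyEq.mp hy
        have hh0 : h =ᶠ[nhds y] 0 := hv0.mono fun z hz => by
          simp only [hh]; rw [hz]; simp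
        rw [hh0.fderiv_eq]
        exact fderiv_const_apply 0
      exact (Filter.EventuallyEq.continuousAt hev)
  have hC1 : ContDiff ℝ 1 h := contDiff_one_iff_fderiv.2 ⟨hdiff, hfc⟩
  have hsupp : HasCompactSupport h := HasCompactSupport.intro hvc fun x hx => by
    simp only [hh]; rw [image_eq_zero_of_notMem_tsupport hx]; simp
  have hzero := integral_fderiv_apply_eq_zero hC1 hsupp w
  -- the two pieces
  set f₁ : E → ℝ := fun x => G x * fderiv ℝ v x w with hf₁
  set f₂ : E → ℝ := fun x => fderiv ℝ G x w * v x with hf₂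
  have hsupp1 : ∀ x ∉ tsupport v, f₁ x = 0 := fun x hx => by
    simp only [hf₁]
    rw [show fderiv ℝ v x = 0 from fderiv_zero_of_nmem hx]
    simp
  have hsupp2 : ∀ x ∉ tsupport v, f₂ x = 0 := fun x hx => by
    simp only [hf₂]; rw [image_eq_zero_of_notMem_tsupport hx]; simp
  have hc1 : Continuous f₁ := by
    refine continuous_of_on_of_zero hΩ (isClosed_tsupport v) hvs ?_ hsupp1
    exact hG.continuousOn.mul ((hvf.clm_apply continuous_const).continuousOn)
  have hc2 : Continuous f₂ := by
    refine continuous_of_on_of_zero hΩ (isClosed_tsupport v) hvs ?_ hsupp2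
    exact (((hG.continuousOn_fderiv_of_isOpen hΩ le_rfl).clm_apply continuousOn_const)).mul
      hv.continuous.continuousOn
  have hi1 : Integrable f₁ volume :=
    hc1.integrable_of_hasCompactSupport (HasCompactSupport.intro hvc hsupp1)
  have hi2 : Integrable f₂ volume :=
    hc2.integrable_of_hasCompactSupport (HasCompactSupport.intro hvc hsupp2)
  have hsum : ∫ x : E, (f₁ x + f₂ x) = 0 := by
    rw [← hzero]
    congr 1
    funext x
    rw [key x]
    simp only [ContinuousLinearMap.add_apply, ContinuousLinearMap.coe_smul',
      Pi.smul_apply, smul_eq_mul, hf₁, hf₂]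
    ring
  rw [integral_add hi1 hi2] at hsum
  have hrestr1 : ∫ x in Ω, f₁ x = ∫ x : E, f₁ x :=
    setIntegral_eq_integral_of_forall_compl_eq_zero fun x hx =>
      hsupp1 x fun hmem => hx (hvs hmem)
  have hrestr2 : ∫ x in Ω, f₂ x = ∫ x : E, f₂ x :=
    setIntegral_eq_integral_of_forall_compl_eq_zero fun x hx =>
      hsupp2 x fun hmem => hx (hvs hmem)
  show ∫ x in Ω, f₁ x = - ∫ x in Ω, f₂ x
  rw [hrestr1, hrestr2]
  linarith
theorem integral_mul_le_sqrt_mul_sqrt {α : Type*} [MeasurableSpace α] (μ : Measure α)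
    (f g : α → ℝ) (hf : MemLp f 2 μ) (hg : MemLp g 2 μ) :
    Integrable (fun x => f x * g x) μ ∧
    ∫ x, f x * g x ∂μ ≤ Real.sqrt (∫ x, f x ^ 2 ∂μ) * Real.sqrt (∫ x, g x ^ 2 ∂μ) := by
  set F : Lp ℝ 2 μ := hf.toLp f with hF
  set G : Lp ℝ 2 μ := hg.toLp g with hG
  have hFf : (F : α → ℝ) =ᵐ[μ] f := hf.coeFn_toLp
  have hGg : (G : α → ℝ) =ᵐ[μ] g := hg.coeFn_toLp
  have hint0 : Integrable (fun x => @inner ℝ _ _ ((F : α → ℝ) x) ((G : α → ℝ) x)) μ :=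
    L2.integrable_inner (𝕜 := ℝ) F G
  have hint : Integrable (fun x => f x * g x) μ := by
    refine hint0.congr ?_
    filter_upwards [hFf, hGg] with x hx hy
    simp [hx, hy, RCLike.inner_apply, starRingEnd_apply]; ring
  refine ⟨hint, ?_⟩
  have h1 : @inner ℝ _ _ F G = ∫ x, f x * g x ∂μ := by
    rw [L2.inner_def]
    refine integral_congr_ae ?_
    filter_upwards [hFf, hGg] with x hx hy
    simp [hx, hy, RCLike.inner_apply, starRingEnd_apply]; ring
  have h2 : @inner ℝ _ _ F F = ∫ x, f x ^ 2 ∂μ := by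
    rw [L2.inner_def]
    refine integral_congr_ae ?_
    filter_upwards [hFf] with x hx
    simp [hx, RCLike.inner_apply, starRingEnd_apply, sq]
  have h3 : @inner ℝ _ _ G G = ∫ x, g x ^ 2 ∂μ := by
    rw [L2.inner_def]
    refine integral_congr_ae ?_
    filter_upwards [hGg] with x hx
    simp [hx, RCLike.inner_apply, starRingEnd_apply, sq]
  have hnF : Real.sqrt (∫ x, f x ^ 2 ∂μ) = ‖F‖ := by
    rw [← h2, real_inner_self_eq_norm_mul_norm, Real.sqrt_mul_self (norm_nonneg F)]
  have hnG : Real.sqrt (∫ x, g x ^ 2 ∂μ) = ‖G‖ := by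
    rw [← h3, real_inner_self_eq_norm_mul_norm, Real.sqrt_mul_self (norm_nonneg G)]
  rw [← h1, hnF, hnG]
  exact real_inner_le_norm F G
theorem prod_integrable {Ω : Set E} (hΩo : IsOpen Ω) {K : Set E} (hK : IsCompact K)
    (hKΩ : K ⊆ Ω) {φ : E → ℝ} (hφ : ContinuousOn φ (Ω - Ω)) {r₁ r₂ : E → ℝ}
    (h1 : Continuous r₁) (h2 : Continuous r₂)
    (hz1 : ∀ x ∉ K, r₁ x = 0) (hz2 : ∀ x ∉ K, r₂ x = 0) :
    Integrable (fun p : E × E => φ (p.1 - p.2) * (r₁ p.1 * r₂ p.2))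
      ((volume.restrict Ω).prod (volume.restrict Ω)) := by
  set f : E × E → ℝ := fun p => φ (p.1 - p.2) * (r₁ p.1 * r₂ p.2) with hf
  have hzero : ∀ p : E × E, p ∉ K ×ˢ K → f p = 0 := by
    intro p hp
    rw [Set.mem_prod] at hp
    push_neg at hp
    simp only [hf]
    by_cases h : p.1 ∈ K
    · rw [hz2 p.2 (hp h)]; ring
    · rw [hz1 p.1 h]; ring
  have hcont : Continuous f := by
    refine continuous_of_on_of_zero (hΩo.prod hΩo) ((hK.prod hK).isClosed)
      (Set.prod_mono hKΩ hKΩ) ?_ hzero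
    refine ContinuousOn.mul ?_ (((h1.comp continuous_fst).mul
      (h2.comp continuous_snd)).continuousOn)
    refine hφ.comp (continuous_fst.sub continuous_snd).continuousOn ?_
    rintro ⟨x, y⟩ ⟨hx, hy⟩
    exact sub_mem_sub hx hy
  have hint : Integrable f volume :=
    hcont.integrable_of_hasCompactSupport (HasCompactSupport.intro (hK.prod hK) hzero)
  rw [Measure.prod_restrict]
  exact hint.restrict

theorem slice_integrable {Ω : Set E} (hΩo : IsOpen Ω) {K : Set E} (hK : IsCompact K)
    (hKΩ : K ⊆ Ω) {φ : E → ℝ} (hφ : ContinuousOn φ (Ω - Ω)) {r : E → ℝ}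
    (hr : Continuous r) (hzr : ∀ x ∉ K, r x = 0) (c : ℝ) {x : E} (hx : x ∈ Ω) :
    Integrable (fun y => φ (x - y) * (c * r y)) (volume.restrict Ω) := by
  set f : E → ℝ := fun y => φ (x - y) * (c * r y) with hf
  have hzero : ∀ y ∉ K, f y = 0 := by
    intro y hy
    simp only [hf]
    rw [hzr y hy]; ring
  have hcont : Continuous f := by
    refine continuous_of_on_of_zero hΩo hK.isClosed hKΩ ?_ hzero
    refine ContinuousOn.mul ?_ ((continuous_const.mul hr).continuousOn)
    refine hφ.comp (continuous_const.sub continuous_id).continuousOn ?_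
    intro y hy
    exact sub_mem_sub hx hy
  exact (hcont.integrable_of_hasCompactSupport
    (HasCompactSupport.intro hK hzero)).restrict
theorem km_identity {Ω : Set E} (hΩo : IsOpen Ω) {F : E → ℝ}
    (hF : ContDiffOn ℝ 2 F (Ω - Ω)) {u : E → E} (husm : ContDiff ℝ (⊤ : ℕ∞) u)
    (huc : HasCompactSupport u) (hus : tsupport u ⊆ Ω) (k m : Fin n) :
    ∫ x in Ω, ∫ y in Ω, F (x - y) *
        (fderiv ℝ u x (EuclideanSpace.single m 1) k * fderiv ℝ u y (EuclideanSpace.single m 1) k)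
      = ∫ p : E × E, -(fderiv ℝ (fun w => fderiv ℝ F w (EuclideanSpace.single m 1)) (p.1 - p.2)
            (EuclideanSpace.single m 1) * (u p.1 k * u p.2 k))
          ∂((volume.restrict Ω).prod (volume.restrict Ω)) := by
  set wm : E := EuclideanSpace.single m (1:ℝ) with hwm
  set DF : E → ℝ := fun z => fderiv ℝ F z wm with hDFdef
  set D2F : E → ℝ := fun z => fderiv ℝ DF z wm with hD2Fdef
  set uk : E → ℝ := fun x => u x k with hukdef
  set g : E → ℝ := fun x => fderiv ℝ u x wm k with hgdef
  have hΩm : MeasurableSet Ω := hΩo.measurableSet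
  have hΩΩ : IsOpen (Ω - Ω) := by rw [sub_eq_add_neg]; exact hΩo.add_right
  have hK : IsCompact (tsupport u) := huc
  have hudiff : Differentiable ℝ u := husm.differentiable (by simp)
  have hukcd : ContDiff ℝ (⊤ : ℕ∞) uk := (EuclideanSpace.proj (𝕜 := ℝ) k).contDiff.comp husm
  have hukc : Continuous uk := hukcd.continuous
  have hgfd : ∀ x, fderiv ℝ uk x wm = g x := by
    intro x
    have h := ((EuclideanSpace.proj (𝕜 := ℝ) k).hasFDerivAt.comp x
      (hudiff x).hasFDerivAt).fderiv
    calc fderiv ℝ uk x wm = fderiv ℝ ((EuclideanSpace.proj (𝕜 := ℝ) k) ∘ u) x wm := rfl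
      _ = g x := by rw [h]; rfl
  have huksup : Function.support uk ⊆ Function.support u := by
    intro x hx
    intro h0
    apply hx
    simp only [hukdef]
    rw [h0]
    rfl
  have hukcs : HasCompactSupport uk := huc.mono huksup
  have huktsΩ : tsupport uk ⊆ Ω := (closure_mono huksup).trans hus
  have hgz : ∀ x ∉ tsupport u, g x = 0 := by
    intro x hx
    simp only [hgdef]
    rw [fderiv_zero_of_nmem hx]
    rfl
  have hukz : ∀ x ∉ tsupport u, uk x = 0 := by
    intro x hx
    simp only [hukdef]
    rw [image_eq_zero_of_notMem_tsupport hx]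
    rfl
  have hgc : Continuous g := by
    have h1 : Continuous (fun x => fderiv ℝ u x wm) :=
      (husm.continuous_fderiv (by simp)).clm_apply continuous_const
    exact (EuclideanSpace.proj (𝕜 := ℝ) k).continuous.comp h1
  have hDFcd : ContDiffOn ℝ 1 DF (Ω - Ω) :=
    (hF.fderiv_of_isOpen hΩΩ (by norm_num)).clm_apply contDiffOn_const
  have hDFc : ContinuousOn DF (Ω - Ω) := hDFcd.continuousOn
  have hD2Fc : ContinuousOn D2F (Ω - Ω) :=
    (hDFcd.continuousOn_fderiv_of_isOpen hΩΩ le_rfl).clm_apply continuousOn_const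
  have stepA : ∀ x ∈ Ω, ∫ y in Ω, F (x - y) * (g x * g y)
      = ∫ y in Ω, DF (x - y) * (g x * uk y) := by
    intro x hx
    have hHcd : ContDiffOn ℝ 1 (fun y => F (x - y)) Ω := by
      refine (hF.of_le one_le_two).comp ((contDiff_const.sub contDiff_id).contDiffOn) ?_
      intro y hy; exact sub_mem_sub hx hy
    have hHfd : ∀ y ∈ Ω, fderiv ℝ (fun y => F (x - y)) y wm = -(DF (x - y)) := by
      intro y hy
      have hdF : DifferentiableAt ℝ F (x - y) :=
        (hF.contDiffAt (hΩΩ.mem_nhds (sub_mem_sub hx hy))).differentiableAt two_ne_zero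
      have hmap : HasFDerivAt (fun y : E => x - y) (-(ContinuousLinearMap.id ℝ _)) y :=
        (hasFDerivAt_id y).const_sub x
      have hcomp := (hdF.hasFDerivAt.comp y hmap).fderiv
      rw [show (fun y : E => F (x - y)) = F ∘ (fun y : E => x - y) from rfl, hcomp]
      simp [hDFdef]
    calc ∫ y in Ω, F (x - y) * (g x * g y)
        = ∫ y in Ω, g x * ((fun y => F (x - y)) y * fderiv ℝ uk y wm) := by
          refine setIntegral_congr_fun hΩm (fun y hy => ?_)
          rw [hgfd y]; ring
      _ = g x * ∫ y in Ω, (fun y => F (x - y)) y * fderiv ℝ uk y wm :=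
          integral_const_mul _ _
      _ = g x * -∫ y in Ω, fderiv ℝ (fun y => F (x - y)) y wm * uk y := by
          rw [ibp hΩo hHcd hukcd hukcs huktsΩ wm]
      _ = g x * ∫ y in Ω, DF (x - y) * uk y := by
          rw [← integral_neg]
          congr 1
          refine setIntegral_congr_fun hΩm (fun y hy => ?_)
          rw [hHfd y hy]; ring
      _ = ∫ y in Ω, DF (x - y) * (g x * uk y) := by
          rw [← integral_const_mul]
          refine setIntegral_congr_fun hΩm (fun y hy => ?_)
          ring
  have hint1 : Integrable (fun p : E × E => DF (p.1 - p.2) * (g p.1 * uk p.2))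
      ((volume.restrict Ω).prod (volume.restrict Ω)) :=
    prod_integrable hΩo hK hus hDFc hgc hukc hgz hukz
  have hint2 : Integrable (fun p : E × E => -(D2F (p.1 - p.2) * (uk p.1 * uk p.2)))
      ((volume.restrict Ω).prod (volume.restrict Ω)) :=
    (prod_integrable hΩo hK hus hD2Fc hukc hukc hukz hukz).neg
  have stepB : ∫ x in Ω, ∫ y in Ω, DF (x - y) * (g x * uk y)
      = ∫ y in Ω, ∫ x in Ω, DF (x - y) * (g x * uk y) :=
    integral_integral_swap (by exact hint1)
  have stepC : ∀ y ∈ Ω, ∫ x in Ω, DF (x - y) * (g x * uk y)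
      = ∫ x in Ω, -(D2F (x - y) * (uk x * uk y)) := by
    intro y hy
    have hGcd : ContDiffOn ℝ 1 (fun x => DF (x - y)) Ω :=
      hDFcd.comp ((contDiff_id.sub contDiff_const).contDiffOn)
        (fun x hx => sub_mem_sub hx hy)
    have hGfd : ∀ x ∈ Ω, fderiv ℝ (fun x => DF (x - y)) x wm = D2F (x - y) := by
      intro x hx
      have hdDF : DifferentiableAt ℝ DF (x - y) :=
        (hDFcd.contDiffAt (hΩΩ.mem_nhds (sub_mem_sub hx hy))).differentiableAt one_ne_zero
      have hmap : HasFDerivAt (fun x : E => x - y) (ContinuousLinearMap.id ℝ _) x :=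
        (hasFDerivAt_id x).sub_const y
      have hcomp := (hdDF.hasFDerivAt.comp x hmap).fderiv
      rw [show (fun x : E => DF (x - y)) = DF ∘ (fun x : E => x - y) from rfl, hcomp]
      rfl
    calc ∫ x in Ω, DF (x - y) * (g x * uk y)
        = ∫ x in Ω, uk y * ((fun x => DF (x - y)) x * fderiv ℝ uk x wm) := by
          refine setIntegral_congr_fun hΩm (fun x hx => ?_)
          rw [hgfd x]; ring
      _ = uk y * ∫ x in Ω, (fun x => DF (x - y)) x * fderiv ℝ uk x wm :=
          integral_const_mul _ _
      _ = uk y * -∫ x in Ω, fderiv ℝ (fun x => DF (x - y)) x wm * uk x := by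
          rw [ibp hΩo hGcd hukcd hukcs huktsΩ wm]
      _ = ∫ x in Ω, -(D2F (x - y) * (uk x * uk y)) := by
          rw [mul_neg, ← integral_const_mul, ← integral_neg]
          refine setIntegral_congr_fun hΩm (fun x hx => ?_)
          rw [hGfd x hx]; ring
  have stepD : ∫ y in Ω, ∫ x in Ω, -(D2F (x - y) * (uk x * uk y))
      = ∫ p : E × E, -(D2F (p.1 - p.2) * (uk p.1 * uk p.2))
          ∂((volume.restrict Ω).prod (volume.restrict Ω)) := by
    rw [← integral_integral_swap (f := fun x y => -(D2F (x - y) * (uk x * uk y)))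
      (by exact hint2)]
    exact integral_integral (by exact hint2)
  show (∫ x in Ω, ∫ y in Ω, F (x - y) * (g x * g y))
      = ∫ p : E × E, -(D2F (p.1 - p.2) * (uk p.1 * uk p.2))
          ∂((volume.restrict Ω).prod (volume.restrict Ω))
  calc ∫ x in Ω, ∫ y in Ω, F (x - y) * (g x * g y)
      = ∫ x in Ω, ∫ y in Ω, DF (x - y) * (g x * uk y) :=
        setIntegral_congr_fun hΩm (fun x hx => stepA x hx)
    _ = ∫ y in Ω, ∫ x in Ω, DF (x - y) * (g x * uk y) := stepB
    _ = ∫ y in Ω, ∫ x in Ω, -(D2F (x - y) * (uk x * uk y)) :=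
        setIntegral_congr_fun hΩm (fun y hy => stepC y hy)
    _ = _ := stepD
lemma sum_neg_mul_sum (c d : Fin n → ℝ) :
    ∑ k, ∑ m, -(c m * d k) = -((∑ m, c m) * ∑ k, d k) := by
  simp [Finset.sum_mul, Finset.mul_sum, mul_comm]

theorem aux_main {Ω : Set E} (hΩo : IsOpen Ω) {F : E → ℝ}
    (hF : ContDiffOn ℝ 2 F (Ω - Ω))
    (hlap2 : MemLp (fun p : E × E => lap F (p.1 - p.2)) 2
      ((volume.restrict Ω).prod (volume.restrict Ω)))
    {u : E → E} (husm : ContDiff ℝ (⊤ : ℕ∞) u) (huc : HasCompactSupport u)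
    (hus : tsupport u ⊆ Ω) :
    ∫ x in Ω, ∫ y in Ω, F (x - y) * frob (jac u x) (jac u y)
      ≤ Real.sqrt (∫ x in Ω, ∫ y in Ω, (lap F (x - y)) ^ 2) * ∫ x in Ω, ‖u x‖ ^ 2 := by
  set D : E × E → ℝ := fun p : E × E => lap F (p.1 - p.2) with hDdef
  set P : E × E → ℝ := fun p : E × E => ∑ k, u p.1 k * u p.2 k with hPdef
  have hΩm : MeasurableSet Ω := hΩo.measurableSet
  have hΩΩ : IsOpen (Ω - Ω) := by rw [sub_eq_add_neg]; exact hΩo.add_right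
  have hK : IsCompact (tsupport u) := huc
  have hukc : ∀ k : Fin n, Continuous (fun x => u x k) := fun k =>
    (EuclideanSpace.proj (𝕜 := ℝ) k).continuous.comp husm.continuous
  have hukz : ∀ (k : Fin n), ∀ x ∉ tsupport u, u x k = 0 := fun k x hx => by
    rw [image_eq_zero_of_notMem_tsupport hx]; rfl
  have hgc : ∀ k m : Fin n,
      Continuous (fun x => fderiv ℝ u x (EuclideanSpace.single m 1) k) := fun k m =>
    (EuclideanSpace.proj (𝕜 := ℝ) k).continuous.comp
      ((husm.continuous_fderiv (by simp)).clm_apply continuous_const)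
  have hgz : ∀ (k m : Fin n), ∀ x ∉ tsupport u,
      fderiv ℝ u x (EuclideanSpace.single m 1) k = 0 := fun k m x hx => by
    rw [fderiv_zero_of_nmem hx]; rfl
  have hFc : ContinuousOn F (Ω - Ω) := hF.continuousOn
  have hDWcd : ∀ m : Fin n, ContDiffOn ℝ 1
      (fun z => fderiv ℝ F z (EuclideanSpace.single m 1)) (Ω - Ω) := fun m =>
    (hF.fderiv_of_isOpen hΩΩ (by norm_num)).clm_apply contDiffOn_const
  have hD2Fc : ∀ m : Fin n, ContinuousOn
      (fun z => fderiv ℝ (fun w => fderiv ℝ F w (EuclideanSpace.single m 1)) z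
        (EuclideanSpace.single m 1)) (Ω - Ω) := fun m =>
    ((hDWcd m).continuousOn_fderiv_of_isOpen hΩΩ le_rfl).clm_apply continuousOn_const
  -- integrability of the inner-integral functions
  have hIkm : ∀ k m : Fin n, Integrable (fun x => ∫ y in Ω, F (x - y) *
      (fderiv ℝ u x (EuclideanSpace.single m 1) k *
       fderiv ℝ u y (EuclideanSpace.single m 1) k)) (volume.restrict Ω) := by
    intro k m
    have hprod := prod_integrable hΩo hK hus hFc (hgc k m) (hgc k m) (hgz k m) (hgz k m)
    exact hprod.integral_prod_left
  -- step 1 : expand frob and pull finite sums out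
  have LHS1 : (∫ x in Ω, ∫ y in Ω, F (x - y) * frob (jac u x) (jac u y))
      = ∑ k, ∑ m, ∫ x in Ω, ∫ y in Ω, F (x - y) *
          (fderiv ℝ u x (EuclideanSpace.single m 1) k *
           fderiv ℝ u y (EuclideanSpace.single m 1) k) := by
    have hsum1 : ∀ x ∈ Ω, (∫ y in Ω, F (x - y) * frob (jac u x) (jac u y))
        = ∑ k, ∑ m, ∫ y in Ω, F (x - y) *
            (fderiv ℝ u x (EuclideanSpace.single m 1) k *
             fderiv ℝ u y (EuclideanSpace.single m 1) k) := by
      intro x hx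
      have h1 : ∀ y : E, F (x - y) * frob (jac u x) (jac u y)
          = ∑ k, ∑ m, F (x - y) *
              (fderiv ℝ u x (EuclideanSpace.single m 1) k *
               fderiv ℝ u y (EuclideanSpace.single m 1) k) := by
        intro y
        simp [frob, jac, Finset.mul_sum]
      rw [show (fun y => F (x - y) * frob (jac u x) (jac u y))
          = fun y => ∑ k, ∑ m, F (x - y) *
              (fderiv ℝ u x (EuclideanSpace.single m 1) k *
               fderiv ℝ u y (EuclideanSpace.single m 1) k) from funext h1]
      rw [integral_finset_sum _ (fun k _ => integrable_finset_sum _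
        (fun m _ => slice_integrable hΩo hK hus hFc (hgc k m) (hgz k m) _ hx))]
      refine Finset.sum_congr rfl fun k _ => ?_
      rw [integral_finset_sum _
        (fun m _ => slice_integrable hΩo hK hus hFc (hgc k m) (hgz k m) _ hx)]
    rw [setIntegral_congr_fun hΩm (fun x hx => hsum1 x hx)]
    rw [integral_finset_sum _ (fun k _ => integrable_finset_sum _ (fun m _ => hIkm k m))]
    refine Finset.sum_congr rfl fun k _ => ?_
    rw [integral_finset_sum _ (fun m _ => hIkm k m)]
  -- integrands after double integration by parts
  have hint2 : ∀ k m : Fin n, Integrable (fun p : E × E =>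
      -(fderiv ℝ (fun w => fderiv ℝ F w (EuclideanSpace.single m 1)) (p.1 - p.2)
          (EuclideanSpace.single m 1) * (u p.1 k * u p.2 k)))
      ((volume.restrict Ω).prod (volume.restrict Ω)) := fun k m =>
    (prod_integrable hΩo hK hus (hD2Fc m) (hukc k) (hukc k) (hukz k) (hukz k)).neg
  have LHS3 : (∑ k : Fin n, ∑ m : Fin n, ∫ p : E × E,
        -(fderiv ℝ (fun w => fderiv ℝ F w (EuclideanSpace.single m 1)) (p.1 - p.2)
            (EuclideanSpace.single m 1) * (u p.1 k * u p.2 k))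
        ∂((volume.restrict Ω).prod (volume.restrict Ω)))
      = ∫ p : E × E, -(D p) * P p ∂((volume.restrict Ω).prod (volume.restrict Ω)) := by
    rw [show (∑ k : Fin n, ∑ m : Fin n, ∫ p : E × E,
        -(fderiv ℝ (fun w => fderiv ℝ F w (EuclideanSpace.single m 1)) (p.1 - p.2)
            (EuclideanSpace.single m 1) * (u p.1 k * u p.2 k))
        ∂((volume.restrict Ω).prod (volume.restrict Ω)))
      = ∑ k : Fin n, ∫ p : E × E, (∑ m : Fin n,
        -(fderiv ℝ (fun w => fderiv ℝ F w (EuclideanSpace.single m 1)) (p.1 - p.2)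
            (EuclideanSpace.single m 1) * (u p.1 k * u p.2 k)))
        ∂((volume.restrict Ω).prod (volume.restrict Ω)) from
      Finset.sum_congr rfl fun k _ => (integral_finset_sum _ (fun m _ => hint2 k m)).symm]
    rw [← integral_finset_sum _ (fun k _ => integrable_finset_sum _ (fun m _ => hint2 k m))]
    refine integral_congr_ae (Eventually.of_forall fun p => ?_)
    show ∑ k : Fin n, ∑ m : Fin n, -(_ * _) = -(D p) * P p
    rw [hDdef, hPdef]
    show ∑ k : Fin n, ∑ m : Fin n,
        -(fderiv ℝ (fun w => fderiv ℝ F w (EuclideanSpace.single m 1)) (p.1 - p.2)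
            (EuclideanSpace.single m 1) * (u p.1 k * u p.2 k))
      = -(lap F (p.1 - p.2)) * ∑ k, u p.1 k * u p.2 k
    rw [lap, neg_mul]
    exact sum_neg_mul_sum _ _
  -- MemLp facts
  have hPc : Continuous P := by
    refine continuous_finset_sum _ fun k _ => ?_
    exact ((hukc k).comp continuous_fst).mul ((hukc k).comp continuous_snd)
  have hPz : ∀ p : E × E, p ∉ (tsupport u) ×ˢ (tsupport u) → P p = 0 := by
    intro p hp
    rw [Set.mem_prod] at hp
    push_neg at hp
    simp only [hPdef]
    by_cases h : p.1 ∈ tsupport u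
    · exact Finset.sum_eq_zero fun k _ => by rw [hukz k p.2 (hp h)]; ring
    · exact Finset.sum_eq_zero fun k _ => by rw [hukz k p.1 h]; ring
  have hP2z : ∀ p : E × E, p ∉ (tsupport u) ×ˢ (tsupport u) → P p ^ 2 = 0 :=
    fun p hp => by rw [hPz p hp]; ring
  have hP2int : Integrable (fun p : E × E => P p ^ 2)
      ((volume.restrict Ω).prod (volume.restrict Ω)) := by
    have hint : Integrable (fun p : E × E => P p ^ 2) volume :=
      (hPc.pow 2).integrable_of_hasCompactSupport
        (HasCompactSupport.intro (hK.prod hK) hP2z)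
    rw [Measure.prod_restrict]
    exact hint.restrict
  have hP2 : MemLp P 2 ((volume.restrict Ω).prod (volume.restrict Ω)) :=
    (memLp_two_iff_integrable_sq hPc.aestronglyMeasurable).2 hP2int
  have hD2 : MemLp (fun p : E × E => -(D p)) 2
      ((volume.restrict Ω).prod (volume.restrict Ω)) := by
    exact hlap2.neg
  -- Cauchy-Schwarz
  have hCS := (integral_mul_le_sqrt_mul_sqrt
    ((volume.restrict Ω).prod (volume.restrict Ω)) (fun p => -(D p)) P hD2 hP2).2
  -- identify the D-square integral
  have hDsqint : Integrable (fun p : E × E => D p ^ 2)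
      ((volume.restrict Ω).prod (volume.restrict Ω)) := hlap2.integrable_sq
  have hDsq : (∫ p : E × E, (-(D p)) ^ 2
        ∂((volume.restrict Ω).prod (volume.restrict Ω)))
      = ∫ x in Ω, ∫ y in Ω, (lap F (x - y)) ^ 2 := by
    rw [show (fun p : E × E => (-(D p)) ^ 2) = fun p : E × E => D p ^ 2 from
      funext fun p => by ring]
    exact (integral_integral (f := fun x y => (lap F (x - y)) ^ 2)
      (by exact hDsqint)).symm
  -- bound the P-square integral
  have hnormsq : ∀ a : E, ‖a‖ ^ 2 = ∑ k, (a k) ^ 2 := by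
    intro a
    rw [EuclideanSpace.norm_eq, Real.sq_sqrt (by positivity)]
    simp [sq_abs]
  have hPbound : ∀ p : E × E, P p ^ 2 ≤ ‖u p.1‖ ^ 2 * ‖u p.2‖ ^ 2 := by
    intro p
    rw [hnormsq (u p.1), hnormsq (u p.2)]
    exact Finset.sum_mul_sq_le_sq_mul_sq _ _ _
  have hnuz : ∀ x ∉ tsupport u, ‖u x‖ ^ 2 = 0 := fun x hx => by
    rw [image_eq_zero_of_notMem_tsupport hx]; simp
  have hnu : Integrable (fun x => ‖u x‖ ^ 2) (volume.restrict Ω) :=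
    ((husm.continuous.norm.pow 2).integrable_of_hasCompactSupport
      (HasCompactSupport.intro hK hnuz)).restrict
  have hC : (0:ℝ) ≤ ∫ x in Ω, ‖u x‖ ^ 2 :=
    setIntegral_nonneg hΩm fun x _ => by positivity
  have hinner_bound : ∀ x : E, (∫ y in Ω, P (x, y) ^ 2)
      ≤ ‖u x‖ ^ 2 * ∫ y in Ω, ‖u y‖ ^ 2 := by
    intro x
    have h1 : Integrable (fun y => P (x, y) ^ 2) (volume.restrict Ω) := by
      refine (Integrable.restrict ?_)
      refine (((hPc.comp (Continuous.prodMk_right x)).pow 2).integrable_of_hasCompactSupport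
        (HasCompactSupport.intro hK fun y hy => ?_))
      have : (x, y) ∉ (tsupport u) ×ˢ (tsupport u) := by
        rw [Set.mem_prod]; push_neg; exact fun _ => hy
      rw [Pi.pow_apply, Function.comp_apply, hPz _ this]; ring
    have h2 : Integrable (fun y => ‖u x‖ ^ 2 * ‖u y‖ ^ 2) (volume.restrict Ω) :=
      hnu.const_mul _
    calc (∫ y in Ω, P (x, y) ^ 2) ≤ ∫ y in Ω, ‖u x‖ ^ 2 * ‖u y‖ ^ 2 :=
          integral_mono h1 h2 fun y => hPbound (x, y)
      _ = ‖u x‖ ^ 2 * ∫ y in Ω, ‖u y‖ ^ 2 := integral_const_mul _ _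
  have houter : (∫ p : E × E, P p ^ 2 ∂((volume.restrict Ω).prod (volume.restrict Ω)))
      ≤ (∫ x in Ω, ‖u x‖ ^ 2) * ∫ x in Ω, ‖u x‖ ^ 2 := by
    have h3 : Integrable (fun x => ∫ y in Ω, P (x, y) ^ 2) (volume.restrict Ω) := by
      exact hP2int.integral_prod_left
    have h4 : Integrable (fun x => ‖u x‖ ^ 2 * ∫ y in Ω, ‖u y‖ ^ 2)
        (volume.restrict Ω) := hnu.mul_const _
    calc (∫ p : E × E, P p ^ 2 ∂((volume.restrict Ω).prod (volume.restrict Ω)))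
        = ∫ x in Ω, ∫ y in Ω, P (x, y) ^ 2 := by
          exact (integral_integral (f := fun x y => P (x, y) ^ 2) (by exact hP2int)).symm
      _ ≤ ∫ x in Ω, (‖u x‖ ^ 2 * ∫ y in Ω, ‖u y‖ ^ 2) :=
          integral_mono h3 h4 fun x => hinner_bound x
      _ = (∫ x in Ω, ‖u x‖ ^ 2) * ∫ x in Ω, ‖u x‖ ^ 2 := integral_mul_const _ _
  have hsqrtP : Real.sqrt (∫ p : E × E, P p ^ 2
        ∂((volume.restrict Ω).prod (volume.restrict Ω))) ≤ ∫ x in Ω, ‖u x‖ ^ 2 := by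
    have h5 := Real.sqrt_le_sqrt houter
    rwa [show (∫ x in Ω, ‖u x‖ ^ 2) * ∫ x in Ω, ‖u x‖ ^ 2
        = (∫ x in Ω, ‖u x‖ ^ 2) ^ 2 from (sq _).symm, Real.sqrt_sq hC] at h5
  -- assemble
  calc ∫ x in Ω, ∫ y in Ω, F (x - y) * frob (jac u x) (jac u y)
      = ∑ k : Fin n, ∑ m : Fin n, ∫ x in Ω, ∫ y in Ω, F (x - y) *
          (fderiv ℝ u x (EuclideanSpace.single m 1) k *
           fderiv ℝ u y (EuclideanSpace.single m 1) k) := LHS1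
    _ = ∑ k : Fin n, ∑ m : Fin n, ∫ p : E × E,
          -(fderiv ℝ (fun w => fderiv ℝ F w (EuclideanSpace.single m 1)) (p.1 - p.2)
              (EuclideanSpace.single m 1) * (u p.1 k * u p.2 k))
          ∂((volume.restrict Ω).prod (volume.restrict Ω)) :=
        Finset.sum_congr rfl fun k _ => Finset.sum_congr rfl fun m _ =>
          km_identity hΩo hF husm huc hus k m
    _ = ∫ p : E × E, -(D p) * P p ∂((volume.restrict Ω).prod (volume.restrict Ω)) := LHS3
    _ ≤ Real.sqrt (∫ p : E × E, (-(D p)) ^ 2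
          ∂((volume.restrict Ω).prod (volume.restrict Ω))) *
        Real.sqrt (∫ p : E × E, P p ^ 2
          ∂((volume.restrict Ω).prod (volume.restrict Ω))) := hCS
    _ = Real.sqrt (∫ x in Ω, ∫ y in Ω, (lap F (x - y)) ^ 2) *
        Real.sqrt (∫ p : E × E, P p ^ 2
          ∂((volume.restrict Ω).prod (volume.restrict Ω))) := by rw [hDsq]
    _ ≤ Real.sqrt (∫ x in Ω, ∫ y in Ω, (lap F (x - y)) ^ 2) * ∫ x in Ω, ‖u x‖ ^ 2 :=
        mul_le_mul_of_nonneg_left hsqrtP (Real.sqrt_nonneg _)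


/-- The L² norm (of displacements) is controlled by the nonlocal energy norm:
  `‖u‖_A² ≤ ‖ΔÃ(|·−·|)‖_{L²(Ω×Ω)} ‖u‖²_{L²}`, hence `L²(Ω;ℝⁿ)` embeds continuously
  into the completion `V_A`. -/

theorem L2_embeds_into_VA
    {n : ℕ} (Ω : Set (EuclideanSpace ℝ (Fin n)))
    (hΩo : IsOpen Ω) (hΩb : Bornology.IsBounded Ω)
    (Atil : ℝ → ℝ)
    (hF : ContDiffOn ℝ 2 (fun z : EuclideanSpace ℝ (Fin n) => Atil ‖z‖) (Ω - Ω))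
    (hlap2 : MemLp
      (fun p : EuclideanSpace ℝ (Fin n) × EuclideanSpace ℝ (Fin n) =>
        lap (fun z : EuclideanSpace ℝ (Fin n) => Atil ‖z‖) (p.1 - p.2)) 2
      ((volume.restrict Ω).prod (volume.restrict Ω)))
    (hinner : ∀ u : EuclideanSpace ℝ (Fin n) → EuclideanSpace ℝ (Fin n),
      IsTestVF Ω u → u ≠ 0 →
      0 < ∫ x in Ω, ∫ y in Ω, Atil ‖x - y‖ * frob (jac u x) (jac u y))
    (u : EuclideanSpace ℝ (Fin n) → EuclideanSpace ℝ (Fin n)) (hu : IsTestVF Ω u) :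
    ∫ x in Ω, ∫ y in Ω, Atil ‖x - y‖ * frob (jac u x) (jac u y)
      ≤ Real.sqrt (∫ x in Ω, ∫ y in Ω,
          (lap (fun z : EuclideanSpace ℝ (Fin n) => Atil ‖z‖) (x - y)) ^ 2)
        * ∫ x in Ω, ‖u x‖ ^ 2 := by
  obtain ⟨husm, huc, hus⟩ := hu
  exact aux_main hΩo hF hlap2 husm huc hus
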